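/- As subsets of Spec A, one has Spec A_Σ = ⋃_{Σ' ⊆ Σ} V(I_{Σ'}); that is, the minimal primes of A containing the ideal (xᵢ : i ∉ Σ) are exactly the I_{Σ'} with Σ' ⊆ Σ. -/

import Mathlib

noncomputable section
namespace IKM

open MvPowerSeries IsLocalRing

/-- Index set for the variables `x₁,…,xₙ, y₁,…,yₙ, t₁,…,t_g`. -/
abbrev Idx (n g : ℕ) := (Fin n ⊕ Fin n) ⊕ Fin g

variable (O : Type) [CommRing O] [IsDomain O] [IsDiscreteValuationRing O]
variable (n g : ℕ)

/-- The power series ring `O⟦x,y,t⟧`. -/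
abbrev P := MvPowerSeries (Idx n g) O

def x (i : Fin n) : P O n g := X (.inl (.inl i))
def y (i : Fin n) : P O n g := X (.inl (.inr i))
def t (k : Fin g) : P O n g := X (.inr k)

/-- The ideal `(x₁y₁, …, xₙyₙ)`. -/
def relIdeal : Ideal (P O n g) := Ideal.span (Set.range fun i => x O n g i * y O n g i)

/-- `A = O⟦x,y,t⟧/(xᵢyᵢ)`. -/
abbrev A := P O n g ⧸ relIdeal O n g

def xbar (i : Fin n) : A O n g := Ideal.Quotient.mk _ (x O n g i)
def ybar (i : Fin n) : A O n g := Ideal.Quotient.mk _ (y O n g i)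
def tbar (k : Fin g) : A O n g := Ideal.Quotient.mk _ (t O n g k)

/-- The ideal `(xᵢ : i ∉ Σ)` of `A`. -/
def xIdeal (S : Finset (Fin n)) : Ideal (A O n g) :=
  Ideal.span {z | ∃ i ∉ S, z = xbar O n g i}

/-- `A_Σ = A/(xᵢ : i ∉ Σ)`. -/
abbrev ASigma (S : Finset (Fin n)) := A O n g ⧸ xIdeal O n g S

/-- The ideal `I_Σ = (xᵢ : i ∉ Σ) + (y_j : j ∈ Σ)` of `A`. -/
def ISigma (S : Finset (Fin n)) : Ideal (A O n g) :=
  Ideal.span ({z | ∃ i ∉ S, z = xbar O n g i} ∪ {z | ∃ j ∈ S, z = ybar O n g j})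

/-- Length of an `O`-module, as the Krull dimension of its lattice of submodules. -/
def moduleLength (M : Type) [AddCommGroup M] [Module O M] : WithBot ℕ∞ :=
  Order.krullDim (Submodule O M)

/-- `ord(a) = length_O (O/(a))`, the normalized valuation of `a`. -/
def ordO (a : O) : WithBot ℕ∞ := moduleLength O (O ⧸ Ideal.span {a})

/-- A Noetherian local ring is regular if its maximal ideal can be generated by
`dim R` many elements. -/
def IsRegularLocal (R : Type) [CommRing R] : Prop :=
  IsNoetherianRing R ∧ ∃ _ : IsLocalRing R,
      ∃ s : Finset R,
        Ideal.span (s : Set R) = maximalIdeal R ∧ (s.card : WithBot ℕ∞) = ringKrullDim R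


section SetToZeroAux
set_option linter.unusedSectionVars false

variable {σ : Type} [DecidableEq σ] {R : Type} [CommRing R]

noncomputable def setToZeroFun (T : Finset σ) (f : MvPowerSeries σ R) : MvPowerSeries σ R :=
  fun d => if ∀ i ∈ T, d i = 0 then coeff d f else 0

theorem coeff_setToZeroFun (T : Finset σ) (f : MvPowerSeries σ R) (d : σ →₀ ℕ) :
    coeff d (setToZeroFun T f) = if ∀ i ∈ T, d i = 0 then coeff d f else 0 := rfl

/-- Substituting `X i = 0` for `i ∈ T`. -/
noncomputable def setToZero (T : Finset σ) : MvPowerSeries σ R →+* MvPowerSeries σ R where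
  toFun := setToZeroFun T
  map_one' := by
    ext d
    rw [coeff_setToZeroFun]
    by_cases h : ∀ i ∈ T, d i = 0
    · rw [if_pos h]
    · rw [if_neg h, MvPowerSeries.coeff_one, if_neg]
      intro h0; exact h fun i _ => by rw [h0]; rfl
  map_mul' f g := by
    show setToZeroFun T (f * g) = setToZeroFun T f * setToZeroFun T g
    ext d
    rw [coeff_setToZeroFun, MvPowerSeries.coeff_mul, MvPowerSeries.coeff_mul]
    by_cases h : ∀ i ∈ T, d i = 0
    · rw [if_pos h]
      refine Finset.sum_congr rfl fun p hp => ?_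
      rw [Finset.HasAntidiagonal.mem_antidiagonal] at hp
      have h1 : ∀ i ∈ T, p.1 i = 0 := fun i hi => by
        have := h i hi; rw [← hp, Finsupp.add_apply] at this; omega
      have h2 : ∀ i ∈ T, p.2 i = 0 := fun i hi => by
        have := h i hi; rw [← hp, Finsupp.add_apply] at this; omega
      rw [coeff_setToZeroFun, coeff_setToZeroFun, if_pos h1, if_pos h2]
    · rw [if_neg h]
      symm
      refine Finset.sum_eq_zero fun p hp => ?_
      rw [Finset.HasAntidiagonal.mem_antidiagonal] at hp
      push_neg at h
      obtain ⟨i, hi, hdi⟩ := h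
      rw [coeff_setToZeroFun, coeff_setToZeroFun]
      by_cases h2 : ∀ j ∈ T, p.2 j = 0
      · have h1 : ¬∀ j ∈ T, p.1 j = 0 := by
          intro h1; apply hdi; rw [← hp, Finsupp.add_apply, h1 i hi, h2 i hi]
        rw [if_neg h1]; ring
      · rw [if_neg h2]; ring
  map_zero' := by
    ext d; rw [coeff_setToZeroFun]; split_ifs <;> simp
  map_add' f g := by
    ext d
    rw [map_add, coeff_setToZeroFun, coeff_setToZeroFun, coeff_setToZeroFun, map_add]
    split_ifs <;> ring

theorem coeff_setToZero (T : Finset σ) (f : MvPowerSeries σ R) (d : σ →₀ ℕ) :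
    coeff d (setToZero T f) = if ∀ i ∈ T, d i = 0 then coeff d f else 0 := rfl

theorem setToZero_X_mem (T : Finset σ) {i : σ} (hi : i ∈ T) :
    setToZero T (X i : MvPowerSeries σ R) = 0 := by
  ext d
  rw [coeff_setToZero, map_zero]
  split_ifs with h
  · rw [MvPowerSeries.coeff_X, if_neg]
    intro h0
    have := h i hi
    rw [h0, Finsupp.single_apply, if_pos rfl] at this
    exact one_ne_zero this
  · rfl

theorem setToZero_X_not_mem (T : Finset σ) {i : σ} (hi : i ∉ T) :
    setToZero T (X i : MvPowerSeries σ R) = X i := by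
  ext d
  rw [coeff_setToZero]
  split_ifs with h
  · rfl
  · rw [MvPowerSeries.coeff_X, if_neg]
    intro h0
    apply h
    intro j hj
    rw [h0, Finsupp.single_apply, if_neg]
    rintro rfl; exact hi hj

theorem mem_spanX_iff (T : Finset σ) (f : MvPowerSeries σ R) :
    f ∈ Ideal.span ((fun i => (X i : MvPowerSeries σ R)) '' T) ↔
      ∀ d : σ →₀ ℕ, (∀ i ∈ T, d i = 0) → coeff d f = 0 := by
  constructor
  · intro hf d hd
    have hker : Ideal.span ((fun i => (X i : MvPowerSeries σ R)) '' T)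
        ≤ RingHom.ker (setToZero T) := by
      rw [Ideal.span_le]
      rintro _ ⟨i, hi, rfl⟩
      exact RingHom.mem_ker.2 (setToZero_X_mem T hi)
    have h0 : setToZero T f = 0 := RingHom.mem_ker.1 (hker hf)
    have := congrArg (coeff d) h0
    rw [coeff_setToZero, if_pos hd, map_zero] at this
    exact this
  · induction T using Finset.induction_on generalizing f with
    | empty =>
      intro hf
      have : f = 0 := MvPowerSeries.ext fun d => by
        rw [map_zero]; exact hf d (by simp)
      rw [this]; exact Ideal.zero_mem _
    | @insert a T'' ha ih =>
      intro hf
      have hdvd : X a ∣ f - setToZero {a} f := by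
        rw [X_dvd_iff]
        intro m hm
        rw [map_sub, coeff_setToZero, if_pos (by simpa using hm), sub_self]
      have hg : setToZero {a} f ∈
          Ideal.span ((fun i => (X i : MvPowerSeries σ R)) '' T'') := by
        apply ih
        intro d hd
        rw [coeff_setToZero]
        split_ifs with h
        · apply hf
          intro i hi
          rcases Finset.mem_insert.1 hi with rfl | hi'
          · simpa using h
          · exact hd i hi'
        · rfl
      obtain ⟨g, hgeq⟩ := hdvd
      have hXa : (X a : MvPowerSeries σ R) ∈
          Ideal.span ((fun i => (X i : MvPowerSeries σ R)) '' (insert a T'')) :=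
        Ideal.subset_span ⟨a, by simp, rfl⟩
      have h2 : f - setToZero {a} f ∈
          Ideal.span ((fun i => (X i : MvPowerSeries σ R)) '' (insert a T'')) := by
        rw [hgeq]; exact Ideal.mul_mem_right g _ hXa
      have h1 : setToZero {a} f ∈
          Ideal.span ((fun i => (X i : MvPowerSeries σ R)) '' (insert a T'')) :=
        Ideal.span_mono (Set.image_mono (by simp [Finset.subset_insert]  )) hg
      have := Ideal.add_mem _ h1 h2
      simpa using this

theorem spanX_eq_ker (T : Finset σ) :
    Ideal.span ((fun i => (X i : MvPowerSeries σ R)) '' T)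
      = RingHom.ker (setToZero T) := by
  ext f
  rw [mem_spanX_iff, RingHom.mem_ker]
  constructor
  · intro h
    ext d
    rw [coeff_setToZero, map_zero]
    split_ifs with hd
    · exact h d hd
    · rfl
  · intro h d hd
    have := congrArg (coeff d) h
    rwa [coeff_setToZero, if_pos hd, map_zero] at this

theorem spanX_isPrime [IsDomain R] (T : Finset σ) :
    (Ideal.span ((fun i => (X i : MvPowerSeries σ R)) '' T)).IsPrime := by
  haveI : IsDomain (MvPowerSeries σ R) := NoZeroDivisors.to_isDomain _
  rw [spanX_eq_ker]
  exact RingHom.ker_isPrime _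

theorem X_not_mem_spanX [Nontrivial R] (T : Finset σ) {j : σ} (hj : j ∉ T) :
    (X j : MvPowerSeries σ R) ∉
      Ideal.span ((fun i => (X i : MvPowerSeries σ R)) '' T) := by
  rw [mem_spanX_iff]
  intro h
  have h1 := h (Finsupp.single j 1) (fun i hi => by
    rw [Finsupp.single_apply, if_neg]
    rintro rfl; exact hj hi)
  rw [MvPowerSeries.coeff_X, if_pos rfl] at h1
  exact one_ne_zero h1

theorem X_mem_spanX (T : Finset σ) {j : σ} (hj : j ∈ T) :
    (X j : MvPowerSeries σ R) ∈
      Ideal.span ((fun i => (X i : MvPowerSeries σ R)) '' T) :=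
  Ideal.subset_span ⟨j, hj, rfl⟩


end SetToZeroAux

section Statement3Aux

variable (O : Type) [CommRing O] [IsDomain O] [IsDiscreteValuationRing O] (n g : ℕ)

/-- The set of variables generating `I_Σ` upstairs. -/
def TSet (S' : Finset (Fin n)) : Finset (Idx n g) :=
  (S'ᶜ.image fun i => (Sum.inl (Sum.inl i) : Idx n g)) ∪
    (S'.image fun j => (Sum.inl (Sum.inr j) : Idx n g))

lemma mem_TSet_x (S' : Finset (Fin n)) (i : Fin n) :
    (Sum.inl (Sum.inl i) : Idx n g) ∈ TSet n g S' ↔ i ∉ S' := by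
  simp [TSet]

lemma mem_TSet_y (S' : Finset (Fin n)) (j : Fin n) :
    (Sum.inl (Sum.inr j) : Idx n g) ∈ TSet n g S' ↔ j ∈ S' := by
  simp [TSet]

/-- The lift of `I_Σ` to the power series ring. -/
def KIdeal (S' : Finset (Fin n)) : Ideal (P O n g) :=
  Ideal.span ((fun a => (X a : P O n g)) '' (TSet n g S'))

lemma relIdeal_le_KIdeal (S' : Finset (Fin n)) :
    relIdeal O n g ≤ KIdeal O n g S' := by
  rw [relIdeal, Ideal.span_le]
  rintro _ ⟨i, rfl⟩
  by_cases hi : i ∈ S'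
  · exact Ideal.mul_mem_left _ _
      (X_mem_spanX (TSet n g S') ((mem_TSet_y n g S' i).2 hi))
  · exact Ideal.mul_mem_right _ _
      (X_mem_spanX (TSet n g S') ((mem_TSet_x n g S' i).2 hi))

lemma ISigma_eq_map (S' : Finset (Fin n)) :
    ISigma O n g S' = Ideal.map (Ideal.Quotient.mk (relIdeal O n g)) (KIdeal O n g S') := by
  rw [ISigma, KIdeal, Ideal.map_span]
  congr 1
  ext z
  constructor
  · rintro (⟨i, hi, rfl⟩ | ⟨j, hj, rfl⟩)
    · exact ⟨X (Sum.inl (Sum.inl i)), ⟨_, (mem_TSet_x n g S' i).2 hi, rfl⟩, rfl⟩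
    · exact ⟨X (Sum.inl (Sum.inr j)), ⟨_, (mem_TSet_y n g S' j).2 hj, rfl⟩, rfl⟩
  · rintro ⟨_, ⟨a, ha, rfl⟩, rfl⟩
    rcases a with (i | j) | k
    · exact Or.inl ⟨i, (mem_TSet_x n g S' i).1 ha, rfl⟩
    · exact Or.inr ⟨j, (mem_TSet_y n g S' j).1 ha, rfl⟩
    · exfalso; simp [TSet] at ha

lemma comap_ISigma (S' : Finset (Fin n)) :
    Ideal.comap (Ideal.Quotient.mk (relIdeal O n g)) (ISigma O n g S')
      = KIdeal O n g S' := by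
  rw [ISigma_eq_map, Ideal.comap_map_of_surjective _ Ideal.Quotient.mk_surjective,
    ← RingHom.ker_eq_comap_bot, Ideal.mk_ker]
  exact sup_eq_left.2 (relIdeal_le_KIdeal O n g S')

lemma ISigma_isPrime (S' : Finset (Fin n)) : (ISigma O n g S').IsPrime := by
  rw [ISigma_eq_map]
  haveI : (KIdeal O n g S').IsPrime := spanX_isPrime _
  exact Ideal.map_isPrime_of_surjective Ideal.Quotient.mk_surjective
    (by rw [Ideal.mk_ker]; exact relIdeal_le_KIdeal O n g S')

lemma xbar_mem_ISigma_iff (S' : Finset (Fin n)) (i : Fin n) :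
    xbar O n g i ∈ ISigma O n g S' ↔ i ∉ S' := by
  have : xbar O n g i ∈ ISigma O n g S' ↔ x O n g i ∈ KIdeal O n g S' := by
    rw [← comap_ISigma]; rfl
  rw [this, x, KIdeal]
  constructor
  · intro h hi
    exact X_not_mem_spanX (TSet n g S') ((mem_TSet_x n g S' i).not.2 (by simpa using hi)) h
  · intro hi
    exact X_mem_spanX _ ((mem_TSet_x n g S' i).2 hi)

lemma ybar_mem_ISigma_iff (S' : Finset (Fin n)) (j : Fin n) :
    ybar O n g j ∈ ISigma O n g S' ↔ j ∈ S' := by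
  have : ybar O n g j ∈ ISigma O n g S' ↔ y O n g j ∈ KIdeal O n g S' := by
    rw [← comap_ISigma]; rfl
  rw [this, y, KIdeal]
  constructor
  · intro h
    by_contra hj
    exact X_not_mem_spanX (TSet n g S') ((mem_TSet_y n g S' j).not.2 hj) h
  · intro hj
    exact X_mem_spanX _ ((mem_TSet_y n g S' j).2 hj)

lemma xbar_mul_ybar (i : Fin n) : xbar O n g i * ybar O n g i = 0 := by
  rw [xbar, ybar, ← map_mul, Ideal.Quotient.eq_zero_iff_mem]
  exact Ideal.subset_span ⟨i, rfl⟩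

lemma xIdeal_le_ISigma {S S' : Finset (Fin n)} (h : S' ⊆ S) :
    xIdeal O n g S ≤ ISigma O n g S' := by
  rw [xIdeal, Ideal.span_le]
  rintro _ ⟨i, hi, rfl⟩
  exact (xbar_mem_ISigma_iff O n g S' i).2 (fun hc => hi (h hc))

lemma ISigma_le_ISigma {S₁ S₂ : Finset (Fin n)} (h : ISigma O n g S₁ ≤ ISigma O n g S₂) :
    S₁ = S₂ := by
  ext i
  constructor
  · intro hi
    exact (ybar_mem_ISigma_iff O n g S₂ i).1
      (h ((ybar_mem_ISigma_iff O n g S₁ i).2 hi))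
  · intro hi
    by_contra hi1
    exact (xbar_mem_ISigma_iff O n g S₂ i).1
      (h ((xbar_mem_ISigma_iff O n g S₁ i).2 hi1)) hi

lemma exists_ISigma_le {S : Finset (Fin n)} {p : Ideal (A O n g)} (hp : p.IsPrime)
    (hle : xIdeal O n g S ≤ p) :
    ∃ S' : Finset (Fin n), S' ⊆ S ∧ ISigma O n g S' ≤ p := by
  classical
  refine ⟨S.filter (fun i => xbar O n g i ∉ p), Finset.filter_subset _ _, ?_⟩
  rw [ISigma, Ideal.span_le]
  rintro _ (⟨i, hi, rfl⟩ | ⟨j, hj, rfl⟩)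
  · by_cases hiS : i ∈ S
    · have : ¬ xbar O n g i ∉ p := fun hc => hi (Finset.mem_filter.2 ⟨hiS, hc⟩)
      exact not_not.1 this
    · exact hle (Ideal.subset_span ⟨i, hiS, rfl⟩)
  · rw [Finset.mem_filter] at hj
    have h0 : xbar O n g j * ybar O n g j ∈ p := by
      rw [xbar_mul_ybar]; exact p.zero_mem
    rcases hp.mem_or_mem h0 with h | h
    · exact absurd h hj.2
    · exact h

end Statement3Aux

/-- As subsets of `Spec A` one has
`Spec A_Σ = ⋃_{Σ' ⊆ Σ} V(I_{Σ'})`: the minimal primes of `A` over the ideal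
`(xᵢ : i ∉ Σ)` are exactly the ideals `I_{Σ'}` with `Σ' ⊆ Σ`. -/
theorem statement3 (O : Type) [CommRing O] [IsDomain O] [IsDiscreteValuationRing O]
    [IsAdicComplete (IsLocalRing.maximalIdeal O) O]
    (n g : ℕ) (hn : 1 ≤ n) (hg : 1 ≤ g) (S : Finset (Fin n)) :
    (xIdeal O n g S).minimalPrimes
      = {I | ∃ S' : Finset (Fin n), S' ⊆ S ∧ I = ISigma O n g S'} := by
  ext p
  simp only [Set.mem_setOf_eq]
  constructor
  · rintro ⟨⟨hprime, hle⟩, hmin⟩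
    obtain ⟨S', hS'S, hIle⟩ := exists_ISigma_le O n g hprime hle
    refine ⟨S', hS'S, le_antisymm ?_ hIle⟩
    exact hmin ⟨ISigma_isPrime O n g S', xIdeal_le_ISigma O n g hS'S⟩ hIle
  · rintro ⟨S', hS'S, rfl⟩
    refine ⟨⟨ISigma_isPrime O n g S', xIdeal_le_ISigma O n g hS'S⟩, ?_⟩
    rintro q ⟨hqprime, hqle⟩ hq2
    obtain ⟨S'', hS''S, hIle⟩ := exists_ISigma_le O n g hqprime hqle
    have : S'' = S' := ISigma_le_ISigma O n g (hIle.trans hq2)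
    rw [← this]
    exact hIle

end IKM
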